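/- Fix a thin family 𝓕 of finite subsets of ℕ. Every infinite set M ⊆ ℕ contains an infinite subset B that decides all of its own finite subsets. -/

import Mathlib

/-- `S` is an initial segment of `T` (finite sets identified with increasing enumerations). -/
def InitSeg (S T : Finset ℕ) : Prop :=
  ∃ S2 : Finset ℕ, T = S ∪ S2 ∧ ∀ a ∈ S, ∀ b ∈ S2, a < b

/-- A family of finite sets is thin: no member is a proper initial segment of another. -/
def ThinFam (F : Set (Finset ℕ)) : Prop :=
  ∀ S ∈ F, ∀ T ∈ F, InitSeg S T → S = T

/-- Two finite sets are comparable if one is an initial segment of the other. -/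
def Comparable (s t : Finset ℕ) : Prop := InitSeg s t ∨ InitSeg t s

/-- `B` accepts `S` (with respect to `F`): some `t ∈ F` comparable with `S`
satisfies `t ∖ S ⊆ B`. -/
def Accepts (F : Set (Finset ℕ)) (S : Finset ℕ) (B : Set ℕ) : Prop :=
  ∃ t ∈ F, Comparable t S ∧ ((t \ S : Finset ℕ) : Set ℕ) ⊆ B

/-- `B` rejects `S`: `B` does not accept `S`. -/
def Rejects (F : Set (Finset ℕ)) (S : Finset ℕ) (B : Set ℕ) : Prop :=
  ¬ Accepts F S B

/-- `B` strongly accepts `S`: every infinite subset of `B` accepts `S`. -/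
def StronglyAccepts (F : Set (Finset ℕ)) (S : Finset ℕ) (B : Set ℕ) : Prop :=
  ∀ C ⊆ B, C.Infinite → Accepts F S C

/-- `B` decides `S`: `B` rejects `S` or strongly accepts `S`. -/
def Decides (F : Set (Finset ℕ)) (S : Finset ℕ) (B : Set ℕ) : Prop :=
  Rejects F S B ∨ StronglyAccepts F S B

/-!
Decisions pass to subsets, and for each finite `S` one can shrink any infinite set to one
deciding `S`: either some infinite subset rejects `S`, or every infinite subset accepts it.
Moreover whether `B` accepts `S` only depends on the part of `B` above `max S`, since for `t`
comparable with `S` the elements of `t \ S` all lie above `S`. A fusion argument now finishes: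
build `D₀ ⊇ D₁ ⊇ ⋯` where `Dₖ₊₁` lies above `mₖ = min Dₖ` and decides every subset of
`[0, mₖ]`, and take `B = {mₖ}`. A nonempty `T ⊆ B` with `max T = mₖ` is decided by `Dₖ₊₁`,
which contains the part of `B` above `T`; and `∅` is decided by `D₀`, itself a step from `M`.
-/

open Set

def strictUpperBounds (T : Finset ℕ) : Set ℕ := {x | ∀ y ∈ T, y < x}

theorem Set.Infinite.inter_strictUpperBounds {C : Set ℕ} (hC : C.Infinite) (T : Finset ℕ) :
    (C ∩ strictUpperBounds T).Infinite := by
  refine hC.inter_of_finite_sdiff ((finite_Iic (T.sup id)).subset ?_)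
  intro x ⟨_, hx⟩
  simp only [strictUpperBounds, mem_ofPred_eq, not_forall, not_lt] at hx
  obtain ⟨y, hy, hxy⟩ := hx
  exact hxy.trans (Finset.le_sup (f := id) hy)

theorem Comparable.sdiff_subset_strictUpperBounds {t T : Finset ℕ} (h : Comparable t T) :
    ((t \ T : Finset ℕ) : Set ℕ) ⊆ strictUpperBounds T := by
  rcases h with ⟨R, rfl, -⟩ | ⟨R, rfl, hR⟩
  · simp [Finset.sdiff_eq_empty_iff_subset.mpr Finset.subset_union_left]
  · intro x hx y hy
    simp only [Finset.coe_sdiff, mem_sdiff, Finset.mem_coe, Finset.mem_union] at hx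
    exact hR y hy x (hx.1.resolve_left hx.2)

section Decisions

variable {F : Set (Finset ℕ)} {S : Finset ℕ} {B C : Set ℕ}

theorem Accepts.mono (hBC : B ⊆ C) (h : Accepts F S B) : Accepts F S C :=
  let ⟨t, htF, hts, htB⟩ := h
  ⟨t, htF, hts, htB.trans hBC⟩

theorem Accepts.inter_strictUpperBounds (h : Accepts F S B) :
    Accepts F S (B ∩ strictUpperBounds S) :=
  let ⟨t, htF, hts, htB⟩ := h
  ⟨t, htF, hts, subset_inter htB hts.sdiff_subset_strictUpperBounds⟩

theorem Decides.anti (hCB : C ⊆ B) (h : Decides F S B) : Decides F S C :=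
  h.imp (fun hB hC => hB (hC.mono hCB)) fun hB D hDC hD => hB D (hDC.trans hCB) hD

theorem Decides.of_inter_strictUpperBounds_subset (hBC : B ∩ strictUpperBounds S ⊆ C)
    (h : Decides F S C) : Decides F S B := by
  refine (h.anti hBC).imp (fun hrej hacc => hrej hacc.inter_strictUpperBounds) ?_
  intro hacc D hDB hD
  exact (hacc _ (inter_subset_inter_left _ hDB) (hD.inter_strictUpperBounds S)).mono
    inter_subset_left

variable (F)

theorem exists_infinite_subset_decides (hB : B.Infinite) (S : Finset ℕ) :
    ∃ C ⊆ B, C.Infinite ∧ Decides F S C := by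
  by_cases hacc : StronglyAccepts F S B
  · exact ⟨B, subset_rfl, hB, Or.inr hacc⟩
  · obtain ⟨C, hCB, hC, hrej⟩ : ∃ C ⊆ B, C.Infinite ∧ Rejects F S C := by
      simpa [StronglyAccepts, Rejects] using hacc
    exact ⟨C, hCB, hC, Or.inl hrej⟩

theorem exists_infinite_subset_decides_finset (hB : B.Infinite) (𝒮 : Finset (Finset ℕ)) :
    ∃ C ⊆ B, C.Infinite ∧ ∀ S ∈ 𝒮, Decides F S C := by
  classical
  induction 𝒮 using Finset.induction_on with
  | empty => exact ⟨B, subset_rfl, hB, by simp⟩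
  | insert S 𝒮 _ ih =>
    obtain ⟨C, hCB, hC, hC𝒮⟩ := ih
    obtain ⟨D, hDC, hD, hDS⟩ := exists_infinite_subset_decides F hC S
    refine ⟨D, hDC.trans hCB, hD, ?_⟩
    simp only [Finset.mem_insert, forall_eq_or_imp]
    exact ⟨hDS, fun T hT => (hC𝒮 T hT).anti hDC⟩

theorem exists_infinite_subset_Ioi_sInf_decides (hB : B.Infinite) :
    ∃ C : Set ℕ, C.Infinite ∧ C ⊆ B ∩ Ioi (sInf B) ∧
      ∀ S ⊆ Finset.Iic (sInf B), Decides F S C := by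
  have hB' : (B ∩ Ioi (sInf B)).Infinite := by
    simpa only [sdiff_eq, compl_Iic] using hB.sdiff (finite_Iic (sInf B))
  obtain ⟨C, hCB, hC, hCS⟩ :=
    exists_infinite_subset_decides_finset F hB' (Finset.Iic (sInf B)).powerset
  exact ⟨C, hC, hCB, fun S hS => hCS S (Finset.mem_powerset.mpr hS)⟩

noncomputable def fusionStep (B : {B : Set ℕ // B.Infinite}) : {C : Set ℕ // C.Infinite} :=
  ⟨_, (exists_infinite_subset_Ioi_sInf_decides F B.2).choose_spec.1⟩

theorem fusionStep_subset (B : {B : Set ℕ // B.Infinite}) :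
    (fusionStep F B : Set ℕ) ⊆ B ∩ Ioi (sInf (B : Set ℕ)) :=
  (exists_infinite_subset_Ioi_sInf_decides F B.2).choose_spec.2.1

theorem decides_fusionStep (B : {B : Set ℕ // B.Infinite}) {S : Finset ℕ}
    (hS : S ⊆ Finset.Iic (sInf (B : Set ℕ))) : Decides F S (fusionStep F B) :=
  (exists_infinite_subset_Ioi_sInf_decides F B.2).choose_spec.2.2 S hS

end Decisions

section FusionSequence

variable {D : ℕ → Set ℕ} (hD : ∀ k, D (k + 1) ⊆ D k ∩ Ioi (sInf (D k)))
  (hne : ∀ k, (D k).Nonempty)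
include hD

theorem antitone_of_succ_subset_inter_Ioi_sInf : Antitone D :=
  antitone_nat_of_succ_le fun k => (hD k).trans inter_subset_left

include hne

theorem strictMono_sInf_of_succ_subset_inter_Ioi_sInf : StrictMono fun k => sInf (D k) :=
  strictMono_nat_of_lt_succ fun k => (hD k (Nat.sInf_mem (hne (k + 1)))).2

theorem range_sInf_subset_zero : range (fun k => sInf (D k)) ⊆ D 0 := by
  rintro _ ⟨k, rfl⟩
  exact antitone_of_succ_subset_inter_Ioi_sInf hD (Nat.zero_le k) (Nat.sInf_mem (hne k))

theorem range_sInf_inter_Ioi_subset (k : ℕ) :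
    range (fun k => sInf (D k)) ∩ Ioi (sInf (D k)) ⊆ D (k + 1) := by
  rintro _ ⟨⟨j, rfl⟩, hkj⟩
  have hkj : k < j := (strictMono_sInf_of_succ_subset_inter_Ioi_sInf hD hne).lt_iff_lt.mp hkj
  exact antitone_of_succ_subset_inter_Ioi_sInf hD hkj (Nat.sInf_mem (hne j))

theorem exists_subset_Iic_sInf_of_subset_range {T : Finset ℕ} (hT : T.Nonempty)
    (hTD : (T : Set ℕ) ⊆ range fun k => sInf (D k)) :
    ∃ k, T ⊆ Finset.Iic (sInf (D k)) ∧
      (range fun k => sInf (D k)) ∩ strictUpperBounds T ⊆ D (k + 1) := by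
  obtain ⟨k, hk⟩ := hTD (T.max'_mem hT)
  dsimp only at hk
  refine ⟨k, fun x hx => Finset.mem_Iic.mpr (hk ▸ T.le_max' x hx), ?_⟩
  refine (inter_subset_inter_right _ fun x hx => ?_).trans (range_sInf_inter_Ioi_subset hD hne k)
  exact hk ▸ hx _ (T.max'_mem hT)

end FusionSequence

theorem exists_infinite_decides_subsets_general (F : Set (Finset ℕ))
    (M : Set ℕ) (hM : M.Infinite) :
    ∃ B ⊆ M, B.Infinite ∧ ∀ T : Finset ℕ, (T : Set ℕ) ⊆ B → Decides F T B := by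
  let E : ℕ → {B : Set ℕ // B.Infinite} := fun k => (fusionStep F)^[k + 1] ⟨M, hM⟩
  have hE : ∀ k, E (k + 1) = fusionStep F (E k) := fun k =>
    Function.iterate_succ_apply' (fusionStep F) (k + 1) ⟨M, hM⟩
  have hD : ∀ k, (E (k + 1) : Set ℕ) ⊆ E k ∩ Ioi (sInf (E k : Set ℕ)) := fun k =>
    hE k ▸ fusionStep_subset F (E k)
  have hne : ∀ k, (E k : Set ℕ).Nonempty := fun k => (E k).2.nonempty
  have hBE : (range fun k => sInf (E k : Set ℕ)) ⊆ E 0 := range_sInf_subset_zero hD hne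
  refine ⟨_, hBE.trans (fusionStep_subset F _ |>.trans inter_subset_left),
    infinite_range_of_injective (strictMono_sInf_of_succ_subset_inter_Ioi_sInf hD hne).injective,
    fun T hT => ?_⟩
  rcases T.eq_empty_or_nonempty with rfl | hT_ne
  · exact (decides_fusionStep F _ (Finset.empty_subset _)).anti hBE
  · obtain ⟨k, hTk, hBk⟩ := exists_subset_Iic_sInf_of_subset_range hD hne hT_ne hT
    exact (hE k ▸ decides_fusionStep F (E k) hTk).of_inter_strictUpperBounds_subset hBk

/-- Every infinite `M` contains an infinite subset `B` deciding all of its own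
finite subsets. -/
theorem exists_infinite_decides_subsets (F : Set (Finset ℕ)) (hF : ThinFam F)
    (M : Set ℕ) (hM : M.Infinite) :
    ∃ B ⊆ M, B.Infinite ∧ ∀ T : Finset ℕ, (T : Set ℕ) ⊆ B → Decides F T B :=
  exists_infinite_decides_subsets_general F M hM
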